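/- arXiv:2601.10888 — 3 statements merged into one kernel-verified Lean document; each statement's English description precedes it below -/
import Mathlib

section
/- The cross-ratio datum T = ((1,2,3,4),(1,2,5,6),(1,3,7,8),(2,4,7,8),(3,4,5,6)) on 8 points has cross-ratio degree exactly 4: there exists a nonzero polynomial q ∈ ℂ[x₁,…,x₅] such that for every (a₁,…,a₅) ∈ (ℂ∖{0,1})⁵ with q(a₁,…,a₅) ≠ 0, the set of tuples (p₁,…,p₈) of pairwise distinct points of ℙ¹(ℂ) with p₁ = ∞, p₂ = 0, p₃ = 1 satisfying CR(p₁,p₂,p₃,p₄)=a₁, CR(p₁,p₂,p₅,p₆)=a₂, CR(p₁,p₃,p₇,p₈)=a₃, CR(p₂,p₄,p₇,p₈)=a₄, CR(p₃,p₄,p₅,p₆)=a₅ has exactly 4 elements. -/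
/-!
After normalizing `p₁ = ∞`, `p₂ = 0`, `p₃ = 1`, the first three conditions are linear:
`p₄ = a₁`, `p₆ = a₂ p₅` and `p₈ = a₃ (p₇ - 1) + 1`. The remaining two conditions then
decouple into a quadratic equation for `p₅` (from `CR(p₃, p₄, p₅, p₆) = a₅`) and one for `p₇`
(from `CR(p₂, p₄, p₇, p₈) = a₄`), so generically there are `2 · 2 = 4` configurations.
The polynomial `q` is the product of the two discriminants with the values and resultants
that keep the eight points pairwise distinct. (Below, `a` and `p` are indexed from `0`.)
-/

open OnePoint

/-- Cross-ratio of four points of `ℙ¹(ℂ) = OnePoint ℂ`: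
`CR(z₁,z₂,z₃,z₄) = ((z₃−z₁)(z₄−z₂))/((z₃−z₂)(z₄−z₁))` when all points are finite,
extended to one point at infinity by omitting the two factors containing it. -/
noncomputable def CR : OnePoint ℂ → OnePoint ℂ → OnePoint ℂ → OnePoint ℂ → ℂ
  | Option.none,    Option.some z₂, Option.some z₃, Option.some z₄ => (z₄ - z₂) / (z₃ - z₂)
  | Option.some z₁, Option.none,    Option.some z₃, Option.some z₄ => (z₃ - z₁) / (z₄ - z₁)
  | Option.some z₁, Option.some z₂, Option.none,    Option.some z₄ => (z₄ - z₂) / (z₄ - z₁)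
  | Option.some z₁, Option.some z₂, Option.some z₃, Option.none    => (z₃ - z₁) / (z₃ - z₂)
  | Option.some z₁, Option.some z₂, Option.some z₃, Option.some z₄ =>
      ((z₃ - z₁) * (z₄ - z₂)) / ((z₃ - z₂) * (z₄ - z₁))
  | _, _, _, _ => 0

open Function

/-- Working with binary forms, `Q.eval p r = 0` says that `p / r` is a root without
dividing by `r`. -/
structure BinaryQuadratic (R : Type*) where
  a : R
  b : R
  c : R

namespace BinaryQuadratic

section CommRing

variable {R : Type*} [CommRing R] (Q P : BinaryQuadratic R)

def eval (x y : R) : R := Q.a * x ^ 2 + Q.b * x * y + Q.c * y ^ 2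

def subst (α β γ δ : R) : BinaryQuadratic R :=
  ⟨Q.eval α γ, 2 * Q.a * α * β + Q.b * (α * δ + β * γ) + 2 * Q.c * γ * δ, Q.eval β δ⟩

theorem eval_subst (α β γ δ x y : R) :
    (Q.subst α β γ δ).eval x y = Q.eval (α * x + β * y) (γ * x + δ * y) := by
  simp only [subst, eval]
  ring

def resultant : R :=
  (Q.a * P.c - P.a * Q.c) ^ 2 - (Q.a * P.b - P.a * Q.b) * (Q.b * P.c - P.b * Q.c)

variable {Q P}

theorem eval_eq_zero_of_mul_eq {x p r : R} (hx : Q.eval x 1 = 0) (h : r * x = p) :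
    Q.eval p r = 0 := by
  subst h
  simp only [eval] at hx ⊢
  linear_combination r ^ 2 * hx

theorem resultant_eq_zero_of_eval_eq_zero {x : R} (hQ : Q.eval x 1 = 0) (hP : P.eval x 1 = 0) :
    Q.resultant P = 0 := by
  simp only [eval] at hQ hP
  unfold resultant
  set e := P.a * Q.b - Q.a * P.b
  set f := P.a * Q.c - Q.a * P.c
  linear_combination ((f - e * x) * P.a - e * P.b) * hQ + (e * Q.b - (f - e * x) * Q.a) * hP

theorem mul_ne_of_eval_ne_zero {x p r : R} (hx : Q.eval x 1 = 0) (hp : Q.eval p r ≠ 0) :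
    r * x ≠ p :=
  fun h => hp (eval_eq_zero_of_mul_eq hx h)

theorem mul_ne_of_resultant_subst_ne_zero {x y α β r : R} (hx : Q.eval x 1 = 0)
    (hy : P.eval y 1 = 0) (hres : Q.resultant (P.subst α β 0 r) ≠ 0) : r * y ≠ α * x + β := by
  intro h
  refine hres (resultant_eq_zero_of_eval_eq_zero hx ?_)
  rw [eval_subst]
  exact eval_eq_zero_of_mul_eq hy (by linear_combination h)

end CommRing

section Field

variable {K : Type*} [Field K] {Q : BinaryQuadratic K}

def roots (Q : BinaryQuadratic K) : Set K := {x | Q.eval x 1 = 0}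

theorem exists_roots_eq_pair [IsAlgClosed K] [NeZero (2 : K)] (ha : Q.a ≠ 0)
    (hd : discrim Q.a Q.b Q.c ≠ 0) : ∃ x y, x ≠ y ∧ Q.roots = {x, y} := by
  obtain ⟨d, hd2⟩ := IsAlgClosed.exists_pow_nat_eq (discrim Q.a Q.b Q.c) two_pos
  have hd0 : d ≠ 0 := by rintro rfl; exact hd (by rw [← hd2]; ring)
  refine ⟨(-Q.b + d) / (2 * Q.a), (-Q.b - d) / (2 * Q.a), fun h => hd0 ?_, ?_⟩
  · field_simp at h
    have h2d : (2 : K) * d = 0 := by linear_combination h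
    exact (mul_eq_zero.1 h2d).resolve_left two_ne_zero
  · ext x
    simp only [roots, eval, Set.mem_ofPred_eq, Set.mem_insert_iff, Set.mem_singleton_iff]
    rw [← quadratic_eq_zero_iff ha (by rw [← hd2]; ring) x]
    ring_nf

theorem ncard_roots [IsAlgClosed K] [NeZero (2 : K)] (ha : Q.a ≠ 0)
    (hd : discrim Q.a Q.b Q.c ≠ 0) : Q.roots.ncard = 2 := by
  obtain ⟨x, y, hxy, h⟩ := exists_roots_eq_pair ha hd
  rw [h, Set.ncard_pair hxy]

end Field

end BinaryQuadratic

open BinaryQuadratic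

section Genericity

variable {R S : Type*} [CommRing R] [CommRing S]

def uQuad (a : Fin 5 → R) : BinaryQuadratic R :=
  ⟨a 1 * (1 - a 4), a 4 * (1 + a 0 * a 1) - (a 0 + a 1), a 0 * (1 - a 4)⟩

def sQuad (a : Fin 5 → R) : BinaryQuadratic R :=
  ⟨a 2 * (1 - a 3), (1 - a 2 - a 0) - a 3 * (1 - a 2 - a 0 * a 2), a 3 * a 0 * (1 - a 2)⟩

theorem uQuad_eval (a : Fin 5 → R) (u : R) :
    (uQuad a).eval u 1 = (u - 1) * (a 1 * u - a 0) - a 4 * ((u - a 0) * (a 1 * u - 1)) := by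
  simp only [uQuad, BinaryQuadratic.eval]
  ring

theorem sQuad_eval (a : Fin 5 → R) (s : R) :
    (sQuad a).eval s 1 =
      s * (a 2 * (s - 1) + 1 - a 0) - a 3 * ((s - a 0) * (a 2 * (s - 1) + 1)) := by
  simp only [sQuad, BinaryQuadratic.eval]
  ring

def uSeparation (a : Fin 5 → R) : R :=
  (uQuad a).eval 1 1 * (uQuad a).eval (a 0) 1 * (uQuad a).eval 1 (a 1) * (uQuad a).eval (a 0) (a 1)

def sSeparation (a : Fin 5 → R) : R :=
  (sQuad a).eval 1 1 * (sQuad a).eval (a 0) 1 * (sQuad a).eval (a 2 - 1) (a 2) *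
    (sQuad a).eval (a 0 - 1 + a 2) (a 2)

def usSeparation (a : Fin 5 → R) : R :=
  (uQuad a).resultant ((sQuad a).subst 1 0 0 1) *
    (uQuad a).resultant ((sQuad a).subst (a 1) 0 0 1) *
    (uQuad a).resultant ((sQuad a).subst 1 (a 2 - 1) 0 (a 2)) *
    (uQuad a).resultant ((sQuad a).subst (a 1) (a 2 - 1) 0 (a 2))

/-- Each factor excludes one coincidence among the eight points: a root `u` or `s` equal to some
`p / r`, or (through a resultant) `r s = α u + β`. -/
def separation (a : Fin 5 → R) : R := uSeparation a * sSeparation a * usSeparation a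

def genericity (a : Fin 5 → R) : R :=
  discrim (uQuad a).a (uQuad a).b (uQuad a).c * discrim (sQuad a).a (sQuad a).b (sQuad a).c *
    separation a

theorem map_genericity (f : R →+* S) (a : Fin 5 → R) : f (genericity a) = genericity (f ∘ a) := by
  simp [genericity, separation, uSeparation, sSeparation, usSeparation, uQuad, sQuad,
    BinaryQuadratic.eval, subst, resultant, discrim, map_ofNat]

noncomputable def genericityPoly : MvPolynomial (Fin 5) ℂ := genericity MvPolynomial.X

theorem eval_genericityPoly (a : Fin 5 → ℂ) :
    MvPolynomial.eval a genericityPoly = genericity a := by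
  rw [genericityPoly, map_genericity]
  congr 1
  funext i
  simp

theorem genericityPoly_ne_zero : genericityPoly ≠ 0 := by
  intro h
  have h2 := eval_genericityPoly (fun _ => 2)
  rw [h, map_zero] at h2
  norm_num [genericity, separation, uSeparation, sSeparation, usSeparation, uQuad, sQuad,
    BinaryQuadratic.eval, subst, resultant, discrim] at h2

end Genericity

theorem CR_infty_coe (z₂ z₃ z₄ : ℂ) : CR ∞ z₂ z₃ z₄ = (z₄ - z₂) / (z₃ - z₂) := rfl

theorem CR_coe (z₁ z₂ z₃ z₄ : ℂ) :
    CR z₁ z₂ z₃ z₄ = ((z₃ - z₁) * (z₄ - z₂)) / ((z₃ - z₂) * (z₄ - z₁)) := rfl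

theorem exists_coe_of_CR_infty_ne_zero {z₂ z₃ z₄ : OnePoint ℂ} (h : CR ∞ z₂ z₃ z₄ ≠ 0) :
    ∃ w₂ w₃ w₄ : ℂ, z₂ = w₂ ∧ z₃ = w₃ ∧ z₄ = w₄ := by
  induction z₂ using OnePoint.rec <;> induction z₃ using OnePoint.rec <;>
    induction z₄ using OnePoint.rec <;> first | exact absurd rfl h | exact ⟨_, _, _, rfl, rfl, rfl⟩

theorem CR_infty_coe_eq_iff {z₂ z₃ z₄ c : ℂ} (h : z₃ ≠ z₂) :
    CR ∞ z₂ z₃ z₄ = c ↔ z₄ = c * (z₃ - z₂) + z₂ := by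
  rw [CR_infty_coe, div_eq_iff (sub_ne_zero.2 h)]
  constructor <;> intro h <;> linear_combination h

section Configuration

variable {a : Fin 5 → ℂ} {u s : ℂ}

theorem CR_one_eq_iff_uQuad (hu : u ≠ a 0) (hv : a 1 * u ≠ 1) :
    CR (1 : ℂ) (a 0) u ((a 1 * u : ℂ) : OnePoint ℂ) = a 4 ↔ (uQuad a).eval u 1 = 0 := by
  rw [CR_coe, div_eq_iff (mul_ne_zero (sub_ne_zero.2 hu) (sub_ne_zero.2 hv)), uQuad_eval,
    sub_eq_zero]

theorem CR_zero_eq_iff_sQuad (hs : s ≠ a 0) (ht : a 2 * (s - 1) + 1 ≠ 0) :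
    CR (0 : ℂ) (a 0) s ((a 2 * (s - 1) + 1 : ℂ) : OnePoint ℂ) = a 3 ↔ (sQuad a).eval s 1 = 0 := by
  rw [CR_coe, sub_zero, sub_zero, div_eq_iff (mul_ne_zero (sub_ne_zero.2 hs) ht), sQuad_eval,
    sub_eq_zero]

variable (a u s) in
def config : Fin 8 → OnePoint ℂ :=
  Fin.cons ∞ ((↑) ∘ ![0, 1, a 0, u, a 1 * u, s, a 2 * (s - 1) + 1])

theorem config_injective_iff :
    Injective (config a u s) ↔ [0, 1, a 0, u, a 1 * u, s, a 2 * (s - 1) + 1].Nodup := by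
  rw [config, Fin.cons_injective_iff, OnePoint.coe_injective.of_comp_iff, ← List.nodup_ofFn]
  simp

variable (a) in
def solSet : Set (Fin 8 → OnePoint ℂ) :=
  {p | Function.Injective p ∧ p 0 = ∞ ∧ p 1 = ((0 : ℂ) : OnePoint ℂ) ∧
    p 2 = ((1 : ℂ) : OnePoint ℂ) ∧
    CR (p 0) (p 1) (p 2) (p 3) = a 0 ∧
    CR (p 0) (p 1) (p 4) (p 5) = a 1 ∧
    CR (p 0) (p 2) (p 6) (p 7) = a 2 ∧
    CR (p 1) (p 3) (p 6) (p 7) = a 3 ∧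
    CR (p 2) (p 3) (p 4) (p 5) = a 4}

theorem config_mem_solSet_iff :
    config a u s ∈ solSet a ↔
      Injective (config a u s) ∧ (uQuad a).eval u 1 = 0 ∧ (sQuad a).eval s 1 = 0 := by
  refine and_congr_right fun hinj => ?_
  have hne : ∀ i j, i ≠ j → config a u s i ≠ config a u s j := fun i j => hinj.ne
  have hu0 : u ≠ 0 := fun h => hne 4 1 (by decide) (congrArg OnePoint.some h)
  have hs1 : s ≠ 1 := fun h => hne 6 2 (by decide) (congrArg OnePoint.some h)
  have hua : u ≠ a 0 := fun h => hne 4 3 (by decide) (congrArg OnePoint.some h)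
  have hv1 : a 1 * u ≠ 1 := fun h => hne 5 2 (by decide) (congrArg OnePoint.some h)
  have hsa : s ≠ a 0 := fun h => hne 6 3 (by decide) (congrArg OnePoint.some h)
  have ht0 : a 2 * (s - 1) + 1 ≠ 0 := fun h => hne 7 1 (by decide) (congrArg OnePoint.some h)
  refine ⟨fun ⟨_, _, _, _, _, _, h₃, h₄⟩ => ?_, fun ⟨hu, hs⟩ => ?_⟩
  · exact ⟨(CR_one_eq_iff_uQuad hua hv1).1 h₄, (CR_zero_eq_iff_sQuad hsa ht0).1 h₃⟩
  · exact ⟨rfl, rfl, rfl, (CR_infty_coe_eq_iff (z₄ := a 0) one_ne_zero).2 (by ring),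
      (CR_infty_coe_eq_iff (z₄ := a 1 * u) hu0).2 (by ring),
      (CR_infty_coe_eq_iff (z₄ := a 2 * (s - 1) + 1) hs1).2 rfl,
      (CR_zero_eq_iff_sQuad hsa ht0).2 hs,
      (CR_one_eq_iff_uQuad hua hv1).2 hu⟩

theorem exists_eq_config_of_mem_solSet (ha : ∀ i, a i ≠ 0 ∧ a i ≠ 1) {p : Fin 8 → OnePoint ℂ}
    (hp : p ∈ solSet a) : ∃ u s, p = config a u s := by
  obtain ⟨hinj, h0, h1, h2, e₀, e₁, e₂, -, -⟩ := hp
  rw [h0, h1, h2] at e₀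
  rw [h0, h1] at e₁
  rw [h0, h2] at e₂
  obtain ⟨-, -, w₃, -, -, hp3⟩ := exists_coe_of_CR_infty_ne_zero (e₀ ▸ (ha 0).1)
  obtain ⟨-, w₄, w₅, -, hp4, hp5⟩ := exists_coe_of_CR_infty_ne_zero (e₁ ▸ (ha 1).1)
  obtain ⟨-, w₆, w₇, -, hp6, hp7⟩ := exists_coe_of_CR_infty_ne_zero (e₂ ▸ (ha 2).1)
  have hw₄ : w₄ ≠ 0 := fun h => absurd (hinj (hp4.trans (h ▸ h1.symm))) (by decide)
  have hw₆ : w₆ ≠ 1 := fun h => absurd (hinj (hp6.trans (h ▸ h2.symm))) (by decide)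
  rw [hp3, CR_infty_coe_eq_iff one_ne_zero] at e₀
  rw [hp4, hp5, CR_infty_coe_eq_iff hw₄] at e₁
  rw [hp6, hp7, CR_infty_coe_eq_iff hw₆] at e₂
  simp only [sub_zero, mul_one, add_zero] at e₀ e₁
  subst e₀ e₁ e₂
  refine ⟨w₄, w₆, funext fun i => ?_⟩
  fin_cases i <;> assumption

theorem uQuad_root_ne (ha : ∀ i, a i ≠ 0 ∧ a i ≠ 1) (hsep : uSeparation a ≠ 0)
    (hu : (uQuad a).eval u 1 = 0) :
    u ≠ a 0 ∧ u ≠ 1 ∧ u ≠ 0 ∧ a 1 * u ≠ u ∧ a 1 * u ≠ a 0 ∧ a 1 * u ≠ 1 ∧ a 1 * u ≠ 0 := by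
  simp only [uSeparation, mul_ne_zero_iff] at hsep
  obtain ⟨⟨⟨h₁, h₂⟩, h₃⟩, h₄⟩ := hsep
  have hu0 : u ≠ 0 := by
    rintro rfl
    simp [BinaryQuadratic.eval, uQuad, (ha 0).1, sub_eq_zero, (ha 4).2.symm] at hu
  refine ⟨by simpa using mul_ne_of_eval_ne_zero hu h₂, by simpa using mul_ne_of_eval_ne_zero hu h₁,
    hu0, fun h => mul_ne_zero (sub_ne_zero.2 (ha 1).2) hu0 (by linear_combination h),
    mul_ne_of_eval_ne_zero hu h₄, mul_ne_of_eval_ne_zero hu h₃, mul_ne_zero (ha 1).1 hu0⟩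

theorem sQuad_root_ne (ha : ∀ i, a i ≠ 0 ∧ a i ≠ 1) (hsep : sSeparation a ≠ 0)
    (hs : (sQuad a).eval s 1 = 0) :
    s ≠ a 0 ∧ s ≠ 1 ∧ s ≠ 0 ∧ a 2 * (s - 1) + 1 ≠ s ∧ a 2 * (s - 1) + 1 ≠ a 0 ∧
      a 2 * (s - 1) + 1 ≠ 1 ∧ a 2 * (s - 1) + 1 ≠ 0 := by
  simp only [sSeparation, mul_ne_zero_iff] at hsep
  obtain ⟨⟨⟨h₁, h₂⟩, h₃⟩, h₄⟩ := hsep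
  have hs1 : s ≠ 1 := by simpa using mul_ne_of_eval_ne_zero hs h₁
  refine ⟨by simpa using mul_ne_of_eval_ne_zero hs h₂, hs1, ?_,
    fun h => mul_ne_zero (sub_ne_zero.2 (ha 2).2) (sub_ne_zero.2 hs1) (by linear_combination h),
    fun h => mul_ne_of_eval_ne_zero hs h₄ (by linear_combination h),
    fun h => mul_ne_zero (ha 2).1 (sub_ne_zero.2 hs1) (by linear_combination h),
    fun h => mul_ne_of_eval_ne_zero hs h₃ (by linear_combination h)⟩
  rintro rfl
  simp [BinaryQuadratic.eval, sQuad, (ha 3).1, (ha 0).1, sub_eq_zero, (ha 2).2.symm] at hs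

theorem root_ne_of_usSeparation_ne_zero (hsep : usSeparation a ≠ 0)
    (hu : (uQuad a).eval u 1 = 0) (hs : (sQuad a).eval s 1 = 0) :
    s ≠ a 1 * u ∧ s ≠ u ∧ a 2 * (s - 1) + 1 ≠ a 1 * u ∧ a 2 * (s - 1) + 1 ≠ u := by
  simp only [usSeparation, mul_ne_zero_iff] at hsep
  obtain ⟨⟨⟨h₁, h₂⟩, h₃⟩, h₄⟩ := hsep
  refine ⟨fun h => mul_ne_of_resultant_subst_ne_zero hu hs h₂ (by linear_combination h),
    fun h => mul_ne_of_resultant_subst_ne_zero hu hs h₁ (by linear_combination h),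
    fun h => mul_ne_of_resultant_subst_ne_zero hu hs h₄ (by linear_combination h),
    fun h => mul_ne_of_resultant_subst_ne_zero hu hs h₃ (by linear_combination h)⟩

theorem config_injective (ha : ∀ i, a i ≠ 0 ∧ a i ≠ 1) (hsep : separation a ≠ 0)
    (hu : (uQuad a).eval u 1 = 0) (hs : (sQuad a).eval s 1 = 0) : Injective (config a u s) := by
  simp only [separation, mul_ne_zero_iff] at hsep
  obtain ⟨⟨hsepu, hseps⟩, hsepus⟩ := hsep
  obtain ⟨hua, hu1, hu0, hvu, hva, hv1, hv0⟩ := uQuad_root_ne ha hsepu hu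
  obtain ⟨hsa, hs1, hs0, hts, hta, ht1, ht0⟩ := sQuad_root_ne ha hseps hs
  obtain ⟨hsv, hsu, htv, htu⟩ := root_ne_of_usSeparation_ne_zero hsepus hu hs
  rw [config_injective_iff, ← List.nodup_reverse]
  simp only [List.reverse_cons, List.reverse_nil, List.nil_append, List.cons_append,
    List.nodup_cons, List.mem_cons, List.not_mem_nil, List.nodup_nil, not_or, not_false_eq_true,
    and_true]
  exact ⟨⟨hts, htv, htu, hta, ht1, ht0⟩, ⟨hsv, hsu, hsa, hs1, hs0⟩, ⟨hvu, hva, hv1, hv0⟩,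
    ⟨hua, hu1, hu0⟩, ⟨(ha 0).2, (ha 0).1⟩, one_ne_zero⟩

theorem injective_config_uncurry : Injective fun x : ℂ × ℂ => config a x.1 x.2 :=
  fun _ _ h => Prod.ext (OnePoint.coe_injective (congrFun h 4))
    (OnePoint.coe_injective (congrFun h 6))

theorem solSet_eq_image (ha : ∀ i, a i ≠ 0 ∧ a i ≠ 1) (hsep : separation a ≠ 0) :
    solSet a = (fun x : ℂ × ℂ => config a x.1 x.2) '' ((uQuad a).roots ×ˢ (sQuad a).roots) := by
  ext p
  constructor
  · intro hp
    obtain ⟨u, s, rfl⟩ := exists_eq_config_of_mem_solSet ha hp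
    obtain ⟨-, hu, hs⟩ := config_mem_solSet_iff.1 hp
    exact ⟨(u, s), ⟨hu, hs⟩, rfl⟩
  · rintro ⟨⟨u, s⟩, ⟨hu, hs⟩, rfl⟩
    exact config_mem_solSet_iff.2 ⟨config_injective ha hsep hu hs, hu, hs⟩

end Configuration

theorem crossRatioDegree_eq_four_T1 :
    ∃ q : MvPolynomial (Fin 5) ℂ, q ≠ 0 ∧
      ∀ a : Fin 5 → ℂ, (∀ i, a i ≠ 0 ∧ a i ≠ 1) → MvPolynomial.eval a q ≠ 0 →
        let S : Set (Fin 8 → OnePoint ℂ) :=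
          {p | Function.Injective p ∧ p 0 = ∞ ∧ p 1 = ((0 : ℂ) : OnePoint ℂ) ∧
            p 2 = ((1 : ℂ) : OnePoint ℂ) ∧
            CR (p 0) (p 1) (p 2) (p 3) = a 0 ∧
            CR (p 0) (p 1) (p 4) (p 5) = a 1 ∧
            CR (p 0) (p 2) (p 6) (p 7) = a 2 ∧
            CR (p 1) (p 3) (p 6) (p 7) = a 3 ∧
            CR (p 2) (p 3) (p 4) (p 5) = a 4}
        S.Finite ∧ S.ncard = 4 := by
  refine ⟨genericityPoly, genericityPoly_ne_zero, fun a ha hq => ?_⟩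
  rw [eval_genericityPoly, genericity, mul_ne_zero_iff, mul_ne_zero_iff] at hq
  obtain ⟨⟨hdu, hds⟩, hsep⟩ := hq
  have hcard : (solSet a).ncard = 4 := by
    rw [solSet_eq_image ha hsep, Set.ncard_image_of_injective _ injective_config_uncurry,
      Set.ncard_prod, ncard_roots (mul_ne_zero (ha 1).1 (sub_ne_zero.2 (ha 4).2.symm)) hdu,
      ncard_roots (mul_ne_zero (ha 2).1 (sub_ne_zero.2 (ha 3).2.symm)) hds]
  show (solSet a).Finite ∧ (solSet a).ncard = 4
  exact ⟨Set.finite_of_ncard_ne_zero (by rw [hcard]; norm_num), hcard⟩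
end

section
/- The cross-ratio datum T = ((1,2,3,5),(1,2,4,6),(1,2,7,8),(3,4,5,6),(3,4,7,8)) on 8 points has cross-ratio degree exactly 4: there exists a nonzero polynomial q ∈ ℂ[x₁,…,x₅] such that for every (a₁,…,a₅) ∈ (ℂ∖{0,1})⁵ with q(a₁,…,a₅) ≠ 0, the set of tuples (p₁,…,p₈) of pairwise distinct points of ℙ¹(ℂ) with p₁ = ∞, p₂ = 0, p₃ = 1 satisfying CR(p₁,p₂,p₃,p₅)=a₁, CR(p₁,p₂,p₄,p₆)=a₂, CR(p₁,p₂,p₇,p₈)=a₃, CR(p₃,p₄,p₅,p₆)=a₄, CR(p₃,p₄,p₇,p₈)=a₅ has exactly 4 elements. -/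
/-!
After the normalisation p₁ = ∞, p₂ = 0, p₃ = 1, the first three conditions read p₅ = a₁,
p₆ = a₂ p₄ and p₈ = a₃ p₇. With t = p₄ and u = p₇, the fourth condition is a quadratic
equation in t alone and the fifth, for fixed t, a quadratic equation in u, so a generic datum
has 2 · 2 = 4 realizations. Genericity is the non-vanishing of the discriminant of the
t-equation and of its resultants with the discriminant of the u-equation and with the four
polynomials expressing the collisions p₇ = p₅, p₇ = p₆, p₈ = p₅, p₈ = p₆; every other
coincidence among the eight points is already ruled out by the equations and by aᵢ ∉ {0, 1}.
-/

open OnePoint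

open Function

theorem exists_ne_setOf_quadratic_eq_zero_eq_pair {K : Type*} [Field K] [NeZero (2 : K)]
    [IsAlgClosed K] {a b c : K} (ha : a ≠ 0) (hd : discrim a b c ≠ 0) :
    ∃ x₁ x₂, x₁ ≠ x₂ ∧ {x | a * (x * x) + b * x + c = 0} = {x₁, x₂} := by
  obtain ⟨s, hs⟩ := IsAlgClosed.exists_eq_mul_self (discrim a b c)
  refine ⟨(-b + s) / (2 * a), (-b - s) / (2 * a), fun h => hd ?_,
    Set.ext (quadratic_eq_zero_iff ha hs)⟩
  have h2s : 2 * s = 0 := by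
    rw [div_left_inj' (mul_ne_zero two_ne_zero ha)] at h
    linear_combination h
  have hs0 : s = 0 := (mul_eq_zero.1 h2s).resolve_left two_ne_zero
  rw [hs, hs0, mul_zero]

/-- The resultant of `a x² + b x + c` and `a' x² + b' x + c'`. -/
def quadResultant {R : Type*} [CommRing R] (a b c a' b' c' : R) : R :=
  (a * c' - a' * c) ^ 2 - (a * b' - a' * b) * (b * c' - b' * c)

theorem quadResultant_eq_zero_of_common_root {R : Type*} [CommRing R] {a b c a' b' c' x : R}
    (hf : a * (x * x) + b * x + c = 0) (hg : a' * (x * x) + b' * x + c' = 0) :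
    quadResultant a b c a' b' c' = 0 := by
  unfold quadResultant
  linear_combination ((a' * c - a * c') - (a' * b - a * b') * x) * (a' * hf - a * hg)
    - (a' * b - a * b') * (b' * hf - b * hg)

theorem Set.ncard_setOf_and_eq_add {α β : Type*} {P : α → Prop} {Q : α → β → Prop}
    {t₁ t₂ : α} (ht : t₁ ≠ t₂) (hP : {t | P t} = {t₁, t₂})
    (hQ₁ : {u | Q t₁ u}.Finite) (hQ₂ : {u | Q t₂ u}.Finite) :
    {x : α × β | P x.1 ∧ Q x.1 x.2}.ncard = {u | Q t₁ u}.ncard + {u | Q t₂ u}.ncard := by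
  have hunion : {x : α × β | P x.1 ∧ Q x.1 x.2} =
      {t₁} ×ˢ {u | Q t₁ u} ∪ {t₂} ×ˢ {u | Q t₂ u} := by
    ext ⟨t, u⟩
    have hPt : P t ↔ t = t₁ ∨ t = t₂ := Set.ext_iff.1 hP t
    simp only [Set.mem_ofPred_eq, Set.mem_union, Set.mem_prod, Set.mem_singleton_iff, hPt]
    aesop
  have hdisj : Disjoint ({t₁} ×ˢ {u | Q t₁ u}) ({t₂} ×ˢ {u | Q t₂ u}) :=
    Set.disjoint_left.2 fun _ h₁ h₂ => ht (h₁.1.symm.trans h₂.1)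
  rw [hunion, Set.ncard_union_eq hdisj ((Set.finite_singleton _).prod hQ₁)
    ((Set.finite_singleton _).prod hQ₂), Set.ncard_prod, Set.ncard_prod,
    Set.ncard_singleton, Set.ncard_singleton, one_mul, one_mul]

theorem OnePoint.injective_vecCons_infty_iff {X : Type*} {n : ℕ} {z : Fin n → X} :
    Injective (Matrix.vecCons ∞ ((↑) ∘ z) : Fin (n + 1) → OnePoint X) ↔ Injective z := by
  rw [Matrix.vecCons, Fin.cons_injective_iff, coe_injective.of_comp_iff]
  simp

theorem OnePoint.exists_eq_vecCons_infty {X : Type*} {n : ℕ} {p : Fin (n + 1) → OnePoint X}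
    (hp : Injective p) (h0 : p 0 = ∞) : ∃ z : Fin n → X, p = Matrix.vecCons ∞ ((↑) ∘ z) := by
  choose z hz using fun i : Fin n =>
    ne_infty_iff_exists.1 fun h => Fin.succ_ne_zero i (hp (h.trans h0.symm))
  refine ⟨z, funext fun i => Fin.cases ?_ (fun i => ?_) i⟩
  · simpa using h0
  · simp [hz]

theorem CR_infty_coe_s4 (x y z : ℂ) : CR ∞ x y z = (z - x) / (y - x) := rfl

theorem CR_coe_s4 (w x y z : ℂ) : CR w x y z = (y - w) * (z - x) / ((y - x) * (z - w)) := rfl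

namespace T4

-- The last two cross-ratio conditions on `config a t u`, with denominators cleared.
def tRel (a : Fin 5 → ℂ) (t : ℂ) : Prop :=
  (a 0 - 1) * (a 1 * t - t) = a 3 * ((a 0 - t) * (a 1 * t - 1))

def uRel (a : Fin 5 → ℂ) (t u : ℂ) : Prop :=
  (u - 1) * (a 2 * u - t) = a 4 * ((u - t) * (a 2 * u - 1))

def points (a : Fin 5 → ℂ) (t u : ℂ) : Fin 7 → ℂ := ![0, 1, t, a 0, a 1 * t, u, a 2 * u]

noncomputable def config (a : Fin 5 → ℂ) (t u : ℂ) : Fin 8 → OnePoint ℂ :=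
  Matrix.vecCons ∞ ((↑) ∘ points a t u)

def realizations (a : Fin 5 → ℂ) : Set (Fin 8 → OnePoint ℂ) :=
  {p | Function.Injective p ∧ p 0 = ∞ ∧ p 1 = ((0 : ℂ) : OnePoint ℂ) ∧
    p 2 = ((1 : ℂ) : OnePoint ℂ) ∧
    CR (p 0) (p 1) (p 2) (p 4) = a 0 ∧
    CR (p 0) (p 1) (p 3) (p 5) = a 1 ∧
    CR (p 0) (p 1) (p 6) (p 7) = a 2 ∧
    CR (p 2) (p 3) (p 4) (p 5) = a 3 ∧
    CR (p 2) (p 3) (p 6) (p 7) = a 4}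

variable {a : Fin 5 → ℂ}

theorem tRel_iff {t : ℂ} : tRel a t ↔
    a 1 * a 3 * (t * t) + ((a 0 - 1) * (a 1 - 1) - a 3 * (a 0 * a 1 + 1)) * t + a 0 * a 3 = 0 := by
  rw [tRel, ← sub_eq_zero]
  constructor <;> intro h <;> linear_combination h

theorem uRel_iff {t u : ℂ} : uRel a t u ↔
    a 2 * (1 - a 4) * (u * u) + (a 4 * (1 + a 2 * t) - t - a 2) * u + (1 - a 4) * t = 0 := by
  rw [uRel, ← sub_eq_zero]
  constructor <;> intro h <;> linear_combination h

theorem config_mem_realizations {t u : ℂ} (ht : tRel a t) (hu : uRel a t u)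
    (hinj : Injective (points a t u)) : config a t u ∈ realizations a := by
  have hne : ∀ i j, i ≠ j → points a t u i - points a t u j ≠ 0 :=
    fun i j h => sub_ne_zero.2 (hinj.ne h)
  have ht0 := hne 2 0 (by decide)
  have hu0 := hne 5 0 (by decide)
  have hd₁ := mul_ne_zero (hne 3 2 (by decide)) (hne 4 1 (by decide))
  have hd₂ := mul_ne_zero (hne 5 2 (by decide)) (hne 6 1 (by decide))
  simp only [points, Matrix.cons_val, sub_zero] at ht0 hu0 hd₁ hd₂
  refine ⟨injective_vecCons_infty_iff.2 hinj, rfl, rfl, rfl, ?_, ?_, ?_, ?_, ?_⟩ <;>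
    simp only [config, points, Matrix.cons_val, Function.comp_apply, CR_infty_coe_s4, CR_coe_s4,
      sub_zero, div_one]
  · rw [div_eq_iff ht0]
  · rw [div_eq_iff hu0]
  · rw [div_eq_iff hd₁]; exact ht
  · rw [div_eq_iff hd₂]; exact hu

theorem exists_of_mem_realizations {p : Fin 8 → OnePoint ℂ} (hp : p ∈ realizations a) :
    ∃ t u, tRel a t ∧ uRel a t u ∧ p = config a t u := by
  obtain ⟨hinj, h0, h1, h2, hc0, hc1, hc2, hc3, hc4⟩ := hp
  obtain ⟨z, rfl⟩ := exists_eq_vecCons_infty hinj h0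
  rw [injective_vecCons_infty_iff] at hinj
  have hne : ∀ i j, i ≠ j → z i - z j ≠ 0 := fun i j h => sub_ne_zero.2 (hinj.ne h)
  simp only [Matrix.cons_val, Function.comp_apply, coe_eq_coe, CR_infty_coe_s4, CR_coe_s4]
    at h1 h2 hc0 hc1 hc2 hc3 hc4
  rw [div_eq_iff (hne 2 0 (by decide))] at hc1
  rw [div_eq_iff (hne 5 0 (by decide))] at hc2
  rw [div_eq_iff (mul_ne_zero (hne 3 2 (by decide)) (hne 4 1 (by decide)))] at hc3
  rw [div_eq_iff (mul_ne_zero (hne 5 2 (by decide)) (hne 6 1 (by decide)))] at hc4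
  simp only [h1, h2, sub_zero, div_one] at hc0 hc1 hc2 hc3 hc4
  rw [hc0, hc1] at hc3
  rw [hc2] at hc4
  have hz : z = points a (z 2) (z 5) := by
    funext i; fin_cases i <;> simp [points, h1, h2, hc0, hc1, hc2]
  exact ⟨z 2, z 5, hc3, hc4, by rw [config, ← hz]⟩

theorem tRel.nondegenerate (ha : ∀ i, a i ≠ 0 ∧ a i ≠ 1) {t : ℂ} (ht : tRel a t) :
    t ≠ 0 ∧ t ≠ 1 ∧ t ≠ a 0 ∧ a 1 * t ≠ 1 ∧ a 1 * t ≠ a 0 ∧ a 1 * t ≠ t := by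
  have h0 i : a i ≠ 0 := (ha i).1
  have h1 i : a i - 1 ≠ 0 := sub_ne_zero.2 (ha i).2
  unfold tRel at ht
  have ht0 : t ≠ 0 := by
    rintro rfl; exact mul_ne_zero (h0 3) (h0 0) (by linear_combination ht)
  have ht1 : t ≠ 1 := by
    rintro rfl; exact mul_ne_zero (mul_ne_zero (h1 0) (h1 1)) (h1 3) (by linear_combination -ht)
  have hta : t ≠ a 0 := by
    rintro rfl; exact mul_ne_zero (mul_ne_zero (h1 0) (h1 1)) (h0 0) (by linear_combination ht)
  refine ⟨ht0, ht1, hta, fun h => ?_, fun h => ?_, fun h => ?_⟩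
  · exact mul_ne_zero (h1 0) (sub_ne_zero.2 ht1.symm)
      (by linear_combination ht + (a 3 * (a 0 - t) - (a 0 - 1)) * h)
  · exact mul_ne_zero (mul_ne_zero (h1 0) (sub_ne_zero.2 hta.symm)) (h1 3)
      (by linear_combination -ht + (a 0 - 1 - a 3 * (a 0 - t)) * h)
  · exact mul_ne_zero (h1 1) ht0 (by linear_combination h)

theorem uRel.nondegenerate (ha : ∀ i, a i ≠ 0 ∧ a i ≠ 1) {t u : ℂ} (ht0 : t ≠ 0) (ht1 : t ≠ 1)
    (hu : uRel a t u) :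
    u ≠ 0 ∧ u ≠ 1 ∧ u ≠ t ∧ a 2 * u ≠ 1 ∧ a 2 * u ≠ t ∧ a 2 * u ≠ u := by
  have h0 i : a i ≠ 0 := (ha i).1
  have h1 i : a i - 1 ≠ 0 := sub_ne_zero.2 (ha i).2
  have h1t : 1 - t ≠ 0 := sub_ne_zero.2 ht1.symm
  unfold uRel at hu
  have hu0 : u ≠ 0 := by
    rintro rfl; exact mul_ne_zero ht0 (h1 4) (by linear_combination -hu)
  have hu1 : u ≠ 1 := by
    rintro rfl; exact mul_ne_zero (mul_ne_zero (h0 4) h1t) (h1 2) (by linear_combination -hu)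
  have hut : u ≠ t := by
    rintro rfl; exact mul_ne_zero (mul_ne_zero (sub_ne_zero.2 ht1) (h1 2)) ht0
      (by linear_combination hu)
  refine ⟨hu0, hu1, hut, fun h => ?_, fun h => ?_, fun h => ?_⟩
  · exact mul_ne_zero (sub_ne_zero.2 hu1) h1t
      (by linear_combination hu + (a 4 * (u - t) - (u - 1)) * h)
  · exact mul_ne_zero (mul_ne_zero (h0 4) (sub_ne_zero.2 hut)) (sub_ne_zero.2 ht1)
      (by linear_combination -hu + (u - 1 - a 4 * (u - t)) * h)
  · exact mul_ne_zero (h1 2) hu0 (by linear_combination h)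

/-- The discriminant of the `t`-equation (`tRel_iff`) times its resultants with the
discriminant of the `u`-equation (`uRel_iff`) and with the polynomials in `t` whose vanishing
means that `u = a 0`, `u = a 1 * t`, `a 2 * u = a 0` or `a 2 * u = a 1 * t` solves the
`u`-equation. -/
def obstruction {R : Type*} [CommRing R] (a : Fin 5 → R) : R :=
  let A := a 1 * a 3
  let B := (a 0 - 1) * (a 1 - 1) - a 3 * (a 0 * a 1 + 1)
  let C := a 0 * a 3
  discrim A B C *
    quadResultant A B C ((a 2 * a 4 - 1) ^ 2)
      (2 * (a 2 * a 4 - 1) * (a 4 - a 2) - 4 * a 2 * (1 - a 4) ^ 2) ((a 4 - a 2) ^ 2) *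
    quadResultant A B C 0 (a 4 * (a 2 * a 0 - 1) - (a 0 - 1))
      ((a 0 - 1) * a 2 * a 0 - a 4 * a 0 * (a 2 * a 0 - 1)) *
    quadResultant A B C (a 1 * (a 1 * a 2 - 1) - a 4 * (a 1 - 1) * a 1 * a 2)
      (a 4 * (a 1 - 1) - (a 1 * a 2 - 1)) 0 *
    quadResultant A B C 0 (a 4 * a 2 * (a 0 - 1) - (a 0 - a 2))
      ((a 0 - a 2) * a 0 - a 4 * a 0 * (a 0 - 1)) *
    quadResultant A B C (a 1 * (a 1 - 1) - a 4 * (a 1 - a 2) * a 1)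
      (a 4 * (a 1 - a 2) - a 2 * (a 1 - 1)) 0

theorem map_obstruction {R S : Type*} [CommRing R] [CommRing S] (φ : R →+* S) (a : Fin 5 → R) :
    φ (obstruction a) = obstruction (φ ∘ a) := by
  simp only [obstruction, quadResultant, discrim, map_mul, map_sub, map_add, map_pow, map_one,
    map_zero, map_ofNat, Function.comp_apply]

theorem eval_obstruction_X {R : Type*} [CommRing R] (a : Fin 5 → R) :
    MvPolynomial.eval a (obstruction MvPolynomial.X) = obstruction a := by
  rw [map_obstruction]
  congr
  funext i
  exact MvPolynomial.eval_X i

theorem obstruction_X_ne_zero :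
    obstruction (MvPolynomial.X : Fin 5 → MvPolynomial (Fin 5) ℂ) ≠ 0 := by
  have hZ : obstruction (![2, 3, 5, 7, 11] : Fin 5 → ℤ) ≠ 0 := by decide
  intro h
  have := eval_obstruction_X (Int.castRingHom ℂ ∘ ![2, 3, 5, 7, 11])
  rw [h, map_zero, ← map_obstruction, eq_comm, map_eq_zero_iff _ Int.cast_injective] at this
  exact hZ this

theorem discrim_ne_zero_of_obstruction_ne_zero (hq : obstruction a ≠ 0) :
    discrim (a 1 * a 3) ((a 0 - 1) * (a 1 - 1) - a 3 * (a 0 * a 1 + 1)) (a 0 * a 3) ≠ 0 := by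
  simp only [obstruction, mul_ne_zero_iff] at hq
  exact hq.1.1.1.1.1

theorem discrim_uRel_ne_zero (hq : obstruction a ≠ 0) {t : ℂ} (ht : tRel a t) :
    discrim (a 2 * (1 - a 4)) (a 4 * (1 + a 2 * t) - t - a 2) ((1 - a 4) * t) ≠ 0 := by
  simp only [obstruction, mul_ne_zero_iff] at hq
  refine fun h => hq.1.1.1.1.2 (quadResultant_eq_zero_of_common_root (tRel_iff.1 ht) ?_)
  rw [discrim] at h
  linear_combination h

theorem ne_of_obstruction_ne_zero (hq : obstruction a ≠ 0) {t u : ℂ} (ht : tRel a t)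
    (hu : uRel a t u) : u ≠ a 0 ∧ u ≠ a 1 * t ∧ a 2 * u ≠ a 0 ∧ a 2 * u ≠ a 1 * t := by
  have hf := tRel_iff.1 ht
  simp only [obstruction, mul_ne_zero_iff] at hq
  obtain ⟨⟨⟨⟨⟨-, -⟩, h₀⟩, h₁⟩, h₂⟩, h₃⟩ := hq
  unfold uRel at hu
  refine ⟨?_, ?_, fun h => ?_, fun h => ?_⟩
  · rintro rfl
    exact h₀ (quadResultant_eq_zero_of_common_root hf (by linear_combination hu))
  · rintro rfl
    exact h₁ (quadResultant_eq_zero_of_common_root hf (by linear_combination hu))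
  · refine h₂ (quadResultant_eq_zero_of_common_root hf ?_)
    linear_combination a 2 * hu -
      ((a 0 + a 2 * u - a 2 - t) - a 4 * (a 0 + a 2 * u - a 2 * t - 1)) * h
  · refine h₃ (quadResultant_eq_zero_of_common_root hf ?_)
    linear_combination a 2 * hu -
      ((a 1 * t + a 2 * u - a 2 - t) - a 4 * (a 1 * t + a 2 * u - a 2 * t - 1)) * h

theorem injective_points (ha : ∀ i, a i ≠ 0 ∧ a i ≠ 1) (hq : obstruction a ≠ 0) {t u : ℂ}
    (ht : tRel a t) (hu : uRel a t u) : Injective (points a t u) := by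
  obtain ⟨ht0, ht1, hta, h1t1, h1ta, h1tt⟩ := ht.nondegenerate ha
  obtain ⟨hu0, hu1, hut, h2u1, h2ut, h2uu⟩ := hu.nondegenerate ha ht0 ht1
  obtain ⟨hua, hu1t, h2ua, h2u1t⟩ := ne_of_obstruction_ne_zero hq ht hu
  obtain ⟨⟨h00, h01⟩, ⟨h10, -⟩, ⟨h20, -⟩⟩ := And.intro (ha 0) (And.intro (ha 1) (ha 2))
  rw [← List.nodup_ofFn]
  simp only [points, List.ofFn_succ, List.ofFn_zero, Matrix.cons_val_zero, Matrix.cons_val_succ,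
    Matrix.cons_val_fin_one, List.nodup_cons, List.mem_cons, List.not_mem_nil, List.nodup_nil,
    zero_ne_one, zero_eq_mul, or_false, false_or, not_or, not_false_eq_true, and_self, and_true]
  grind

theorem ncard_setOf_uRel (ha : ∀ i, a i ≠ 0 ∧ a i ≠ 1) (hq : obstruction a ≠ 0) {t : ℂ}
    (ht : tRel a t) : {u | uRel a t u}.ncard = 2 := by
  have hα : a 2 * (1 - a 4) ≠ 0 := mul_ne_zero (ha 2).1 (sub_ne_zero.2 (ha 4).2.symm)
  obtain ⟨u₁, u₂, hne, hset⟩ :=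
    exists_ne_setOf_quadratic_eq_zero_eq_pair hα (discrim_uRel_ne_zero hq ht)
  rw [(Set.ext fun u => uRel_iff : {u | uRel a t u} = _).trans hset, Set.ncard_pair hne]

theorem ncard_solutions (ha : ∀ i, a i ≠ 0 ∧ a i ≠ 1) (hq : obstruction a ≠ 0) :
    {x : ℂ × ℂ | tRel a x.1 ∧ uRel a x.1 x.2}.ncard = 4 := by
  have hA : a 1 * a 3 ≠ 0 := mul_ne_zero (ha 1).1 (ha 3).1
  obtain ⟨t₁, t₂, hne, hset⟩ :=
    exists_ne_setOf_quadratic_eq_zero_eq_pair hA (discrim_ne_zero_of_obstruction_ne_zero hq)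
  have hT : {t | tRel a t} = {t₁, t₂} := (Set.ext fun t => tRel_iff).trans hset
  have ht₁ : tRel a t₁ := (Set.ext_iff.1 hT t₁).2 (Set.mem_insert _ _)
  have ht₂ : tRel a t₂ := (Set.ext_iff.1 hT t₂).2 (Set.mem_insert_of_mem _ rfl)
  have hfin {t} (ht : tRel a t) : {u | uRel a t u}.Finite :=
    Set.finite_of_ncard_ne_zero (by simp [ncard_setOf_uRel ha hq ht])
  rw [Set.ncard_setOf_and_eq_add hne hT (hfin ht₁) (hfin ht₂), ncard_setOf_uRel ha hq ht₁,
    ncard_setOf_uRel ha hq ht₂]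

theorem injective_config : Injective fun x : ℂ × ℂ => config a x.1 x.2 :=
  fun _ _ h => Prod.ext (coe_injective (congrFun h 3)) (coe_injective (congrFun h 6))

theorem realizations_eq_image (ha : ∀ i, a i ≠ 0 ∧ a i ≠ 1) (hq : obstruction a ≠ 0) :
    realizations a = (fun x : ℂ × ℂ => config a x.1 x.2) '' {x | tRel a x.1 ∧ uRel a x.1 x.2} := by
  ext p
  constructor
  · intro hp
    obtain ⟨t, u, ht, hu, rfl⟩ := exists_of_mem_realizations hp
    exact ⟨(t, u), ⟨ht, hu⟩, rfl⟩
  · rintro ⟨⟨t, u⟩, ⟨ht, hu⟩, rfl⟩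
    exact config_mem_realizations ht hu (injective_points ha hq ht hu)

theorem ncard_realizations (ha : ∀ i, a i ≠ 0 ∧ a i ≠ 1) (hq : obstruction a ≠ 0) :
    (realizations a).ncard = 4 := by
  rw [realizations_eq_image ha hq, Set.ncard_image_of_injective _ injective_config,
    ncard_solutions ha hq]

end T4

theorem crossRatioDegree_eq_four_T4 :
    ∃ q : MvPolynomial (Fin 5) ℂ, q ≠ 0 ∧
      ∀ a : Fin 5 → ℂ, (∀ i, a i ≠ 0 ∧ a i ≠ 1) → MvPolynomial.eval a q ≠ 0 →
        let S : Set (Fin 8 → OnePoint ℂ) :=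
          {p | Function.Injective p ∧ p 0 = ∞ ∧ p 1 = ((0 : ℂ) : OnePoint ℂ) ∧
            p 2 = ((1 : ℂ) : OnePoint ℂ) ∧
            CR (p 0) (p 1) (p 2) (p 4) = a 0 ∧
            CR (p 0) (p 1) (p 3) (p 5) = a 1 ∧
            CR (p 0) (p 1) (p 6) (p 7) = a 2 ∧
            CR (p 2) (p 3) (p 4) (p 5) = a 3 ∧
            CR (p 2) (p 3) (p 6) (p 7) = a 4}
        S.Finite ∧ S.ncard = 4 := by
  refine ⟨T4.obstruction MvPolynomial.X, T4.obstruction_X_ne_zero, fun a ha hq => ?_⟩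
  rw [T4.eval_obstruction_X] at hq
  intro S
  have hcard : S.ncard = 4 := T4.ncard_realizations ha hq
  exact ⟨Set.finite_of_ncard_ne_zero (by rw [hcard]; norm_num), hcard⟩
end

section
/- Let T = (e₁,…,e₅) be a list of five 4-tuples of pairwise distinct indices in {1,…,8} covering every index, and suppose some vertex v ∈ {1,…,8} belongs to all five tuples e₁,…,e₅. Then the cross-ratio degree of T is at most 1: there exists a nonzero polynomial q ∈ ℂ[x₁,…,x₅] such that N_T(a) ≤ 1 for every a ∈ (ℂ∖{0,1})⁵ with q(a) ≠ 0. -/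
/-!
Send the common vertex `v` to `∞` with the coordinate `Y w = 1 / (p w - p v)`. A condition
`CR (p v, p b, p c, p d) = aᵢ` then reads `Y d - Y b = aᵢ (Y c - Y b)`: one linear equation whose
coefficient row depends affinely on `aᵢ` alone.

Let `J` be a maximal set of these rows that are linearly independent for some `a`; a nonzero
polynomial `q` (a determinant) keeps them independent wherever `q a ≠ 0`. If `J` contains all
five rows, then together with `Y v = 0` and the translation normalization `Y g = 0` they cut out
a line in `ℂ⁸`: two configurations have proportional coordinates, and the normalization
`p 0 = ∞, p 1 = 0, p 2 = 1` fixes the scale. Otherwise some row `i ∉ J` lies in the span of the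
rows of `J` for every value of `aᵢ`, in particular for `aᵢ = 0`, where it reads `Y d = Y b`; so
there is no configuration at all.
-/

open OnePoint

theorem CR_swap_pairs (z₁ z₂ z₃ z₄ : OnePoint ℂ) : CR z₂ z₁ z₄ z₃ = CR z₁ z₂ z₃ z₄ := by
  rcases z₁ with _ | a <;> rcases z₂ with _ | b <;> rcases z₃ with _ | c <;>
    rcases z₄ with _ | d <;> simp only [CR]
  all_goals ring1

theorem CR_swap_halves (z₁ z₂ z₃ z₄ : OnePoint ℂ) : CR z₃ z₄ z₁ z₂ = CR z₁ z₂ z₃ z₄ := by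
  rcases z₁ with _ | a <;> rcases z₂ with _ | b <;> rcases z₃ with _ | c <;>
    rcases z₄ with _ | d <;> simp only [CR] <;> first | ring1 | (rw [← neg_div_neg_eq]; ring1)

theorem exists_reindex_CR_eq {α : Type*} {x : Fin 4 → α} {v : α} (hv : ∃ j, x j = v) :
    ∃ σ : Fin 4 → Fin 4, Function.Injective σ ∧ x (σ 0) = v ∧ ∀ p : α → OnePoint ℂ,
      CR (p (x (σ 0))) (p (x (σ 1))) (p (x (σ 2))) (p (x (σ 3))) =
        CR (p (x 0)) (p (x 1)) (p (x 2)) (p (x 3)) := by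
  obtain ⟨j, rfl⟩ := hv
  fin_cases j
  · exact ⟨id, Function.injective_id, rfl, fun p => rfl⟩
  · exact ⟨![1, 0, 3, 2], by decide, rfl, fun p => CR_swap_pairs _ _ _ _⟩
  · exact ⟨![2, 3, 0, 1], by decide, rfl, fun p => CR_swap_halves _ _ _ _⟩
  · exact ⟨![3, 2, 1, 0], by decide, rfl,
      fun p => (CR_swap_halves _ _ _ _).trans (CR_swap_pairs _ _ _ _)⟩

/-- An affine coordinate on `ℙ¹ ∖ {t}`, i.e. a Möbius map sending `t` to `∞`. The value
`coordAway t t = 0` is junk. -/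
noncomputable def coordAway : OnePoint ℂ → OnePoint ℂ → ℂ
  | _, ∞ => 0
  | ∞, (z : ℂ) => z
  | (τ : ℂ), (z : ℂ) => (z - τ)⁻¹

@[simp] theorem coordAway_infty_right (t : OnePoint ℂ) : coordAway t ∞ = 0 := by
  cases t <;> rfl

@[simp] theorem coordAway_infty_coe (z : ℂ) : coordAway ∞ z = z := rfl

@[simp] theorem coordAway_coe_coe (τ z : ℂ) : coordAway τ z = (z - τ)⁻¹ := rfl

@[simp] theorem coordAway_self (t : OnePoint ℂ) : coordAway t t = 0 := by
  induction t using OnePoint.rec <;> simp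

theorem coordAway_injOn (t : OnePoint ℂ) : Set.InjOn (coordAway t) {t}ᶜ := by
  intro z hz z' hz' h
  induction t using OnePoint.rec <;> induction z using OnePoint.rec <;>
    induction z' using OnePoint.rec <;> simp_all [sub_eq_zero, eq_comm]

theorem CR_mul_coordAway_sub {t B C D : OnePoint ℂ} (hB : B ≠ t) (hC : C ≠ t) (hD : D ≠ t)
    (hBC : B ≠ C) (hCD : C ≠ D) :
    CR t B C D * (coordAway t C - coordAway t B) = coordAway t D - coordAway t B := by
  induction t using OnePoint.rec <;> induction B using OnePoint.rec <;>
    induction C using OnePoint.rec <;> induction D using OnePoint.rec <;>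
    simp_all [CR] <;> field_simp <;> ring

theorem eq_of_coordAway_eq_mul {α : Type*} {p p' : α → OnePoint ℂ}
    (hp : Function.Injective p) (hp' : Function.Injective p') {x₀ x₁ x₂ : α}
    (h₀ : p x₀ = ∞) (h₁ : p x₁ = (0 : ℂ)) (h₂ : p x₂ = (1 : ℂ))
    (h₀' : p' x₀ = ∞) (h₁' : p' x₁ = (0 : ℂ)) (h₂' : p' x₂ = (1 : ℂ))
    {v : α} {c : ℂ} (h : ∀ w, coordAway (p' v) (p' w) = c * coordAway (p v) (p w)) :
    p = p' := by
  obtain ⟨hv, rfl⟩ : p v = p' v ∧ c = 1 := by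
    by_cases hvx : v = x₀
    · subst hvx
      have h2 := h x₂
      simp only [h₀, h₀', h₂, h₂', coordAway_infty_coe] at h2
      exact ⟨h₀.trans h₀'.symm, by simpa using h2.symm⟩
    obtain ⟨τ, hτ⟩ := OnePoint.ne_infty_iff_exists.1 (h₀ ▸ hp.ne hvx)
    obtain ⟨τ', hτ'⟩ := OnePoint.ne_infty_iff_exists.1 (h₀' ▸ hp'.ne hvx)
    have h1 := h x₁
    have h2 := h x₂
    rw [← hτ, ← hτ'] at h1 h2 ⊢
    rw [h₁, h₁'] at h1
    rw [h₂, h₂'] at h2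
    -- the scale is read off from `1 / Y x₂ - 1 / Y x₁ = p x₂ - p x₁ = 1`
    obtain rfl : c = 1 := by
      have hinv : ∀ τ : ℂ, (coordAway τ (1 : ℂ))⁻¹ - (coordAway τ (0 : ℂ))⁻¹ = 1 := by simp
      have key := hinv τ'
      rwa [h1, h2, mul_inv, mul_inv, ← mul_sub, hinv, mul_one, inv_eq_one] at key
    simp only [coordAway_coe_coe, one_mul, zero_sub, inv_neg, neg_inj, inv_inj] at h1
    exact ⟨by rw [h1], rfl⟩
  funext w
  by_cases hw : w = v
  · exact hw ▸ hv
  · refine coordAway_injOn (p v) (hp.ne hw) (hv ▸ hp'.ne hw) ?_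
    simpa [hv] using (h w).symm

open Matrix

section LinearAlgebra

variable {K : Type*} [Field K]

theorem dotProduct_eq_zero_of_mem_span {n : Type*} [Fintype n] {s : Set (n → K)} {x z : n → K}
    (hx : x ∈ Submodule.span K s) (hs : ∀ y ∈ s, y ⬝ᵥ z = 0) : x ⬝ᵥ z = 0 := by
  induction hx using Submodule.span_induction with
  | mem y hy => exact hs y hy
  | zero => exact zero_dotProduct z
  | add x y _ _ hx hy => rw [add_dotProduct, hx, hy, add_zero]
  | smul c x _ hx => rw [smul_dotProduct, hx, smul_zero]

theorem exists_eq_smul_of_mulVec_eq_zero {m n : Type*} [Fintype m] [Fintype n]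
    {M : Matrix m n K} (hM : LinearIndependent K M.row)
    (hcard : Fintype.card n = Fintype.card m + 1) {Y Y' : n → K} (hY : Y ≠ 0)
    (hMY : M *ᵥ Y = 0) (hMY' : M *ᵥ Y' = 0) : ∃ c : K, Y' = c • Y := by
  have hker : Module.finrank K (LinearMap.ker M.mulVecLin) = 1 := by
    have hrank : Module.finrank K (LinearMap.range M.mulVecLin) = Fintype.card m :=
      hM.rank_matrix
    have := LinearMap.finrank_range_add_finrank_ker M.mulVecLin
    rw [hrank, Module.finrank_fintype_fun_eq_card] at this
    omega
  obtain ⟨c, hc⟩ := (finrank_eq_one_iff_of_nonzero' (⟨Y, hMY⟩ : LinearMap.ker M.mulVecLin)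
    (fun h => hY congr($h.1))).1 hker ⟨Y', hMY'⟩
  exact ⟨c, by simpa using congrArg Subtype.val hc.symm⟩

theorem exists_ne_zero_linearIndependent_of_eval_ne_zero {σ m n : Type*} [Fintype m]
    [DecidableEq m] [Fintype n] [DecidableEq n] (F : Matrix m n (MvPolynomial σ K)) {a₀ : σ → K}
    (h₀ : LinearIndependent K (F.map (MvPolynomial.eval a₀)).row) :
    ∃ q : MvPolynomial σ K, q ≠ 0 ∧ ∀ a, MvPolynomial.eval a q ≠ 0 →
      LinearIndependent K (F.map (MvPolynomial.eval a)).row := by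
  obtain ⟨g, hg⟩ := LinearMap.exists_leftInverse_of_injective
    (F.map (MvPolynomial.eval a₀)).vecMulLinear
    (LinearMap.ker_eq_bot.2 (Matrix.vecMul_injective_iff.2 h₀))
  set B : Matrix n m K := (LinearMap.toMatrix' g)ᵀ
  have hB : ∀ x, x ᵥ* B = g x := fun x => by simp [B, vecMul_transpose]
  have heval : ∀ a, MvPolynomial.eval a (F * B.map (MvPolynomial.C (σ := σ))).det =
      (F.map (MvPolynomial.eval a) * B).det := by
    intro a
    rw [RingHom.map_det, RingHom.mapMatrix_apply, Matrix.map_mul]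
    congr
    ext
    simp
  refine ⟨(F * B.map (MvPolynomial.C (σ := σ))).det, fun hq => ?_, fun a ha => ?_⟩
  · have hu : IsUnit (F.map (MvPolynomial.eval a₀) * B) := by
      rw [← vecMul_injective_iff_isUnit]
      intro x y hxy
      have hgx : ∀ x, g (x ᵥ* F.map (MvPolynomial.eval a₀)) = x := LinearMap.congr_fun hg
      simpa [← vecMul_vecMul, hB, hgx] using hxy
    exact ((isUnit_iff_isUnit_det _).1 hu).ne_zero (by rw [← heval, hq, map_zero])
  · have hu : IsUnit (F.map (MvPolynomial.eval a) * B) :=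
      (isUnit_iff_isUnit_det _).2 (isUnit_iff_ne_zero.2 (heval a ▸ ha))
    rw [← Matrix.vecMul_injective_iff]
    exact fun x y hxy => vecMul_injective_iff_isUnit.2 hu (by simp [← vecMul_vecMul, hxy])

theorem mem_span_of_forall_not_linearIndepOn_insert {ι V : Type*} [AddCommGroup V] [Module K V]
    [DecidableEq ι] (r : ι → K → V) {J : Set ι} {i : ι} (hi : i ∉ J) {a : ι → K}
    (hJ : LinearIndepOn K (fun j => r j (a j)) J)
    (hdep : ∀ a' : ι → K, ¬ LinearIndepOn K (fun j => r j (a' j)) (insert i J)) (t : K) :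
    r i t ∈ Submodule.span K ((fun j => r j (a j)) '' J) := by
  have heq : Set.EqOn (fun j => r j (a j)) (fun j => r j (Function.update a i t j)) J := by
    intro j hj
    simp [Function.update_of_ne (ne_of_mem_of_not_mem hj hi)]
  by_contra h
  apply hdep (Function.update a i t)
  rw [linearIndepOn_insert hi]
  refine ⟨hJ.congr heq, ?_⟩
  simpa [← Set.image_congr heq] using h

theorem linearIndependent_cons_single_cons_single {n : ℕ} {α : Type*} [Fintype α]
    [DecidableEq α] {f : Fin n → α → K} (hf : LinearIndependent K f) {v g : α} (hgv : g ≠ v)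
    (hfv : ∀ i, f i v = 0) (hfsum : ∀ i, ∑ w, f i w = 0) :
    LinearIndependent K (Fin.cons (Pi.single v 1) (Fin.cons (Pi.single g 1) f)) := by
  refine linearIndependent_finCons.2 ⟨linearIndependent_finCons.2 ⟨hf, fun h => ?_⟩, fun h => ?_⟩
  · have := dotProduct_eq_zero_of_mem_span h (z := 1) <| by
      rintro _ ⟨i, rfl⟩
      rw [dotProduct_one, hfsum]
    simp at this
  · have := dotProduct_eq_zero_of_mem_span h (z := Pi.single v 1) <| by
      rintro _ ⟨i, rfl⟩
      induction i using Fin.cases <;> simp [hgv, hfv]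
    simp at this

end LinearAlgebra

section CrossRow

variable {α : Type*} [DecidableEq α]

/-- The row of the linear equation `Y (x 3) - Y (x 1) = t * (Y (x 2) - Y (x 1))`, which says
`CR (∞, Y (x 1), Y (x 2), Y (x 3)) = t`; the point `x 0` is the one sent to `∞`. -/
def crossRow {R : Type*} [CommRing R] (x : Fin 4 → α) (t : R) : α → R :=
  Pi.single (x 3) 1 - Pi.single (x 1) 1 - t • (Pi.single (x 2) 1 - Pi.single (x 1) 1)

theorem crossRow_dotProduct {R : Type*} [CommRing R] [Fintype α] (x : Fin 4 → α) (t : R)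
    (Y : α → R) : crossRow x t ⬝ᵥ Y = Y (x 3) - Y (x 1) - t * (Y (x 2) - Y (x 1)) := by
  simp [crossRow, sub_dotProduct, smul_dotProduct]

theorem crossRow_zero_dotProduct_ne_zero [Fintype α] {K : Type*} [Field K] {x : Fin 4 → α}
    (hx : Function.Injective x) {Y : α → K} (hY : Set.InjOn Y {x 0}ᶜ) :
    crossRow x (0 : K) ⬝ᵥ Y ≠ 0 := by
  rw [crossRow_dotProduct, zero_mul, sub_zero, sub_ne_zero]
  intro h
  exact absurd (hx (hY (by simp [hx.eq_iff]) (by simp [hx.eq_iff]) h)) (by decide)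

theorem map_crossRow {R S : Type*} [CommRing R] [CommRing S] (φ : R →+* S) (x : Fin 4 → α)
    (t : R) (w : α) : φ (crossRow x t w) = crossRow x (φ t) w := by
  simp [crossRow, Pi.single_apply, apply_ite φ]

end CrossRow

section Generic

variable {K : Type*} [Field K] {n : ℕ} {α : Type*} [Fintype α] [DecidableEq α]
  {e : Fin n → Fin 4 → α} {v g : α}

theorem exists_eq_smul_of_linearIndependent_crossRow (hcard : Fintype.card α = n + 3)
    (he : ∀ i, Function.Injective (e i)) (hev : ∀ i, e i 0 = v) (hgv : g ≠ v) {a : Fin n → K}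
    (ha : LinearIndependent K fun i => crossRow (e i) (a i)) {Y Y' : α → K} (hY : Y ≠ 0)
    (hYv : Y v = 0) (hYg : Y g = 0) (hYa : ∀ i, crossRow (e i) (a i) ⬝ᵥ Y = 0)
    (hY'v : Y' v = 0) (hY'g : Y' g = 0) (hY'a : ∀ i, crossRow (e i) (a i) ⬝ᵥ Y' = 0) :
    ∃ c : K, Y' = c • Y := by
  have hrow_v : ∀ i, crossRow (e i) (a i) v = 0 := fun i => by
    simp [← hev i, crossRow, (he i).eq_iff]
  have hrow_sum : ∀ i, ∑ w, crossRow (e i) (a i) w = 0 := fun i => by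
    rw [← dotProduct_one, crossRow_dotProduct]
    simp
  let M : Matrix (Fin (n + 2)) α K :=
    Matrix.of (Fin.cons (Pi.single v 1) (Fin.cons (Pi.single g 1) fun i => crossRow (e i) (a i)))
  have hker : ∀ Z : α → K, Z v = 0 → Z g = 0 → (∀ i, crossRow (e i) (a i) ⬝ᵥ Z = 0) →
      M *ᵥ Z = 0 := by
    intro Z hZv hZg hZa
    funext k
    induction k using Fin.cases with
    | zero => simpa [M, mulVec] using hZv
    | succ k =>
      induction k using Fin.cases with
      | zero => simpa [M, mulVec] using hZg
      | succ i => simpa [M, mulVec] using hZa i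
  exact exists_eq_smul_of_mulVec_eq_zero
    (linearIndependent_cons_single_cons_single ha hgv hrow_v hrow_sum) (by simp [hcard]) hY
    (hker Y hYv hYg hYa) (hker Y' hY'v hY'g hY'a)

theorem exists_ne_zero_crossRow_solutions_eq_smul_of_eval_ne_zero
    (hcard : Fintype.card α = n + 3) (he : ∀ i, Function.Injective (e i)) (hev : ∀ i, e i 0 = v)
    (hgv : g ≠ v) :
    ∃ q : MvPolynomial (Fin n) K, q ≠ 0 ∧ ∀ a, MvPolynomial.eval a q ≠ 0 →
      ∀ Y Y' : α → K, Set.InjOn Y {v}ᶜ → Y v = 0 → Y g = 0 →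
        (∀ i, crossRow (e i) (a i) ⬝ᵥ Y = 0) → Y' v = 0 → Y' g = 0 →
        (∀ i, crossRow (e i) (a i) ⬝ᵥ Y' = 0) → ∃ c : K, Y' = c • Y := by
  classical
  let rows : (Fin n → K) → Fin n → α → K := fun a i => crossRow (e i) (a i)
  obtain ⟨J, hJ, hJmax⟩ := Finset.exists_max_image
    (Finset.univ.filter fun J : Set (Fin n) => ∃ a₀, LinearIndepOn K (rows a₀) J) Set.ncard
    ⟨∅, by simp⟩
  obtain ⟨a₀, ha₀⟩ := (Finset.mem_filter.1 hJ).2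
  let F : Matrix J α (MvPolynomial (Fin n) K) := Matrix.of fun j w => crossRow (e j) (.X j) w
  have hF : ∀ a, (F.map (MvPolynomial.eval a)).row = fun j : J => rows a j := fun a => by
    ext j w
    simp [F, rows, map_crossRow]
  obtain ⟨q, hq, hqJ⟩ := exists_ne_zero_linearIndependent_of_eval_ne_zero F (a₀ := a₀) (hF a₀ ▸ ha₀)
  refine ⟨q, hq, fun a ha Y Y' hYinj hYv hYg hYa hY'v hY'g hY'a => ?_⟩
  have hJa : LinearIndepOn K (rows a) J := by
    have := hqJ a ha
    rwa [hF] at this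
  by_cases hJu : J = Set.univ
  · subst hJu
    have hcard₂ : ({v, g} : Finset α).card < (Finset.univ : Finset α).card := by
      rw [Finset.card_univ, hcard]
      exact Finset.card_le_two.trans_lt (by omega)
    obtain ⟨w, -, hw⟩ := Finset.exists_mem_notMem_of_card_lt_card hcard₂
    obtain ⟨hwv, hwg⟩ : w ≠ v ∧ w ≠ g := by simpa using hw
    have hY : Y ≠ 0 := fun h0 => hwg (hYinj hwv hgv (by simp [h0]))
    exact exists_eq_smul_of_linearIndependent_crossRow hcard he hev hgv
      (linearIndepOn_univ_iff.1 hJa) hY hYv hYg hYa hY'v hY'g hY'a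
  · obtain ⟨i, hi⟩ := (Set.ne_univ_iff_exists_notMem J).1 hJu
    have hdep : ∀ a', ¬ LinearIndepOn K (rows a') (insert i J) := fun a' h' => by
      have := hJmax (insert i J) (by simpa using ⟨a', h'⟩)
      rw [Set.ncard_insert_of_notMem hi] at this
      omega
    have hmem := mem_span_of_forall_not_linearIndepOn_insert (fun j t => crossRow (e j) t) hi hJa
      hdep 0
    exact absurd (dotProduct_eq_zero_of_mem_span hmem (by rintro _ ⟨j, -, rfl⟩; exact hYa j))
      (crossRow_zero_dotProduct_ne_zero (he i) (hev i ▸ hYinj))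

end Generic

theorem crossRow_dotProduct_coordAway {α : Type*} [Fintype α] [DecidableEq α]
    {p : α → OnePoint ℂ} (hp : Function.Injective p) {x : Fin 4 → α}
    (hx : Function.Injective x) {a : ℂ}
    (ha : CR (p (x 0)) (p (x 1)) (p (x 2)) (p (x 3)) = a) :
    crossRow x a ⬝ᵥ (fun w => coordAway (p (x 0)) (p w)) = 0 := by
  have hne : ∀ k l : Fin 4, k ≠ l → p (x k) ≠ p (x l) := fun k l hkl => hp.ne (hx.ne hkl)
  rw [crossRow_dotProduct, sub_eq_zero, ← ha]
  exact (CR_mul_coordAway_sub (hne 1 0 (by decide)) (hne 2 0 (by decide)) (hne 3 0 (by decide))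
    (hne 1 2 (by decide)) (hne 2 3 (by decide))).symm

theorem crossRatioDegree_le_one_of_vertex_in_all_general
    (T : Fin 5 → Fin 4 → Fin 8)
    (hT : ∀ i, Function.Injective (T i))
    (hv : ∃ v : Fin 8, ∀ i, ∃ j, T i j = v) :
    ∃ q : MvPolynomial (Fin 5) ℂ, q ≠ 0 ∧
      ∀ a : Fin 5 → ℂ, (∀ i, a i ≠ 0 ∧ a i ≠ 1) → MvPolynomial.eval a q ≠ 0 →
        let S : Set (Fin 8 → OnePoint ℂ) :=
          {p | Function.Injective p ∧ p 0 = ∞ ∧ p 1 = ((0 : ℂ) : OnePoint ℂ) ∧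
            p 2 = ((1 : ℂ) : OnePoint ℂ) ∧
            ∀ i, CR (p (T i 0)) (p (T i 1)) (p (T i 2)) (p (T i 3)) = a i}
        S.Finite ∧ S.ncard ≤ 1 := by
  obtain ⟨v, hv⟩ := hv
  choose σ hσ hσv hσCR using fun i => exists_reindex_CR_eq (hv i)
  -- `g` has coordinate `0`: `p g = ∞`, or `p g = 0` when `p v = ∞`
  let g : Fin 8 := if v = 0 then 1 else 0
  obtain ⟨q, hq, hqY⟩ := exists_ne_zero_crossRow_solutions_eq_smul_of_eval_ne_zero (K := ℂ)
    (e := fun i => T i ∘ σ i) (by simp) (fun i => (hT i).comp (hσ i)) hσv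
    (show g ≠ v by unfold g; split_ifs <;> omega)
  refine ⟨q, hq, fun a _ ha => ?_⟩
  intro S
  have hsol : ∀ p ∈ S, ∀ i,
      crossRow (T i ∘ σ i) (a i) ⬝ᵥ (fun w => coordAway (p v) (p w)) = 0 := by
    rintro p ⟨hp, -, -, -, hpa⟩ i
    rw [← hσv i]
    exact crossRow_dotProduct_coordAway hp ((hT i).comp (hσ i)) ((hσCR i p).trans (hpa i))
  have hg : ∀ p ∈ S, coordAway (p v) (p g) = 0 := by
    rintro p ⟨-, hp0, hp1, -⟩
    unfold g
    split_ifs with h <;> simp [h, hp0, hp1]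
  have hS : S.Subsingleton := by
    intro p hpS p' hp'S
    obtain ⟨c, hc⟩ := hqY a ha _ _
      ((coordAway_injOn (p v)).comp hpS.1.injOn fun w hw => hpS.1.ne hw) (coordAway_self _)
      (hg p hpS) (hsol p hpS) (coordAway_self _) (hg p' hp'S) (hsol p' hp'S)
    exact eq_of_coordAway_eq_mul hpS.1 hp'S.1 hpS.2.1 hpS.2.2.1 hpS.2.2.2.1 hp'S.2.1 hp'S.2.2.1
      hp'S.2.2.2.1 (congrFun hc)
  exact ⟨hS.finite, (Set.ncard_le_one hS.finite).2 hS⟩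

/-- If some vertex belongs to all five tuples of the datum, the cross-ratio degree
is at most 1. -/
theorem crossRatioDegree_le_one_of_vertex_in_all
    (T : Fin 5 → Fin 4 → Fin 8)
    (hT : ∀ i, Function.Injective (T i))
    (hcov : ∀ v : Fin 8, ∃ i j, T i j = v)
    (hv : ∃ v : Fin 8, ∀ i, ∃ j, T i j = v) :
    ∃ q : MvPolynomial (Fin 5) ℂ, q ≠ 0 ∧
      ∀ a : Fin 5 → ℂ, (∀ i, a i ≠ 0 ∧ a i ≠ 1) → MvPolynomial.eval a q ≠ 0 →
        let S : Set (Fin 8 → OnePoint ℂ) :=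
          {p | Function.Injective p ∧ p 0 = ∞ ∧ p 1 = ((0 : ℂ) : OnePoint ℂ) ∧
            p 2 = ((1 : ℂ) : OnePoint ℂ) ∧
            ∀ i, CR (p (T i 0)) (p (T i 1)) (p (T i 2)) (p (T i 3)) = a i}
        S.Finite ∧ S.ncard ≤ 1 :=
  crossRatioDegree_le_one_of_vertex_in_all_general T hT hv
end
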